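/- If a family of update functions Upd satisfies P1 and P2 and the singleton condition P6' (|Upd(Pr,B)| ≤ 1 for all Pr, B), then it satisfies the bounded-amplification condition P6'': for each measure space M and probability measure Pr, there exists a constant c such that Pr'(A) ≤ c·Pr(A|B) for all events A, B with Pr(B)>0 and all Pr' ∈ Upd(Pr,B). -/

import Mathlib

open MeasureTheory ProbabilityTheory Set
open scoped Classical NNReal ENNReal

noncomputable section

/-- A family of update functions, one for each measure space. -/
abbrev UpdFamily : Type 1 :=
  ∀ (W : Type) [MeasurableSpace W],
    Set (ProbabilityMeasure W) → Set W → Set (ProbabilityMeasure W)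

/-- Base condition: `Upd(X,B) = ∅` whenever every measure in `X` gives `B` probability 0. -/
def UpdBase (U : UpdFamily) : Prop :=
  ∀ (W : Type) [MeasurableSpace W] (X : Set (ProbabilityMeasure W)) (B : Set W),
    (∀ μ ∈ X, μ B = 0) → U W X B = ∅

/-- The conditional probability `Pr(A|B) = Pr(A ∩ B)/Pr(B)`. -/
def condProb {W : Type} [MeasurableSpace W] (μ : ProbabilityMeasure W) (A B : Set W) : ℝ≥0 :=
  μ (A ∩ B) / μ B

/-- The conditional probability measure `Pr(·|B)` (defined when `Pr(B) > 0`). -/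
def condPM {W : Type} [MeasurableSpace W] (μ : ProbabilityMeasure W) (B : Set W) :
    ProbabilityMeasure W :=
  if h : (μ : Measure W) B ≠ 0 then
    ⟨(μ : Measure W)[|B], cond_isProbabilityMeasure h⟩
  else μ

/-- Pushforward of a probability measure along a measurable map (`f*`). -/
def pushPM {W W' : Type} [MeasurableSpace W] [MeasurableSpace W']
    {f : W → W'} (hf : Measurable f) (μ : ProbabilityMeasure W) : ProbabilityMeasure W' :=
  μ.map hf.aemeasurable

/-- P1: every measure in `Upd(X,B)` assigns probability 1 to `B`. -/
def P1 (U : UpdFamily) : Prop :=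
  ∀ (W : Type) [MeasurableSpace W] (X : Set (ProbabilityMeasure W)) (B : Set W),
    MeasurableSet B → ∀ μ ∈ U W X B, μ B = 1

/-- P2: representation independence under measurable surjections. -/
def P2 (U : UpdFamily) : Prop :=
  ∀ (W W' : Type) [MeasurableSpace W] [MeasurableSpace W'] (f : W → W')
    (hf : Measurable f), Function.Surjective f →
    ∀ (X : Set (ProbabilityMeasure W)) (B : Set W'), MeasurableSet B →
      U W' (pushPM hf '' X) B = pushPM hf '' (U W X (f ⁻¹' B))

/-- P3: compositionality of updating. -/
def P3 (U : UpdFamily) : Prop :=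
  ∀ (W : Type) [MeasurableSpace W] (X : Set (ProbabilityMeasure W)) (B C : Set W),
    MeasurableSet B → MeasurableSet C → U W (U W X B) C = U W X (B ∩ C)

/-- P4: trivial update on sure evidence. -/
def P4 (U : UpdFamily) : Prop :=
  ∀ (W : Type) [MeasurableSpace W] (X : Set (ProbabilityMeasure W)) (B : Set W),
    MeasurableSet B → (∀ μ ∈ X, μ B = 1) → U W X B = X

/-- P5: pointwise union decomposition. -/
def P5 (U : UpdFamily) : Prop :=
  ∀ (W : Type) [MeasurableSpace W] (X : Set (ProbabilityMeasure W)) (B : Set W),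
    MeasurableSet B → U W X B = ⋃ μ ∈ X, U W {μ} B

/-- P6': singleton inputs yield at most one output measure. -/
def P6' (U : UpdFamily) : Prop :=
  ∀ (W : Type) [MeasurableSpace W] (μ : ProbabilityMeasure W) (B : Set W),
    MeasurableSet B → (U W {μ} B).Subsingleton

/-- P6'': bounded amplification relative to conditioning. -/
def P6'' (U : UpdFamily) : Prop :=
  ∀ (W : Type) [MeasurableSpace W] (μ : ProbabilityMeasure W), ∃ c : ℝ≥0,
    ∀ (A B : Set W), MeasurableSet A → MeasurableSet B →
      ∀ ν ∈ U W {μ} B, ν A ≤ c * condProb μ A B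

/-- P6: either P6' or P6'' holds. -/
def P6 (U : UpdFamily) : Prop := P6' U ∨ P6'' U

/-- P7: some non-sure evidence yields a nonempty update. -/
def P7 (U : UpdFamily) : Prop :=
  ∃ (W : Type) (_ : MeasurableSpace W) (X : Set (ProbabilityMeasure W)) (B : Set W),
    MeasurableSet B ∧ (∀ μ ∈ X, μ B ≠ 1) ∧ U W X B ≠ ∅

/-- Conditioning: `Upd_cond(X,B) = {Pr(·|B) : Pr ∈ X, Pr(B) > 0}`. -/
def updCond {W : Type} [MeasurableSpace W] (X : Set (ProbabilityMeasure W)) (B : Set W) :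
    Set (ProbabilityMeasure W) :=
  {ν | ∃ μ ∈ X, 0 < μ B ∧ ν = condPM μ B}

/-- Constraining: `Upd_constrain(X,B) = {Pr ∈ X : Pr(B) = 1}`. -/
def updConstrain {W : Type} [MeasurableSpace W] (X : Set (ProbabilityMeasure W)) (B : Set W) :
    Set (ProbabilityMeasure W) := {μ ∈ X | μ B = 1}

end

/-!
Let `ν ∈ Upd(Pr, B)` and let `𝕋` be the circle with its Haar probability measure. By P2 along
the projection `𝕋 × W → W`, `ν` is the `W`-marginal of an update `ρ` of `Haar ⊗ Pr` on
`𝕋 × B`, and by P6' this `ρ` is the only one. Rotations of `𝕋` fix `Haar ⊗ Pr` and `𝕋 × B`,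
so P2 and P6' make `ρ` rotation invariant: its `𝕋`-marginal is Haar measure. Collapsing
`𝕋 × W` onto the three cells `X`, `(𝕋 × B) \ X`, `(𝕋 × B)ᶜ` shows, again by P2 and P6',
that `ρ` gives equal mass to any two events `X ⊆ 𝕋 × B` of equal prior probability.
Comparing `𝕋 × A` with `I × B`, where `I ⊆ 𝕋` has measure `Pr(A)/Pr(B)`, yields
`ν(A) = Pr(A)/Pr(B)` for `A ⊆ B`: every update is conditioning.
-/

section Cells

variable {V : Type} {X B : Set V}

noncomputable def trichotomy (X B : Set V) (v : V) : Fin 3 :=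
  if v ∈ X then 0 else if v ∈ B then 1 else 2

lemma trichotomy_preimage_zero : trichotomy X B ⁻¹' {0} = X := by
  ext v; by_cases hX : v ∈ X <;> by_cases hB : v ∈ B <;> simp [trichotomy, hX, hB]

lemma trichotomy_preimage_one : trichotomy X B ⁻¹' {1} = B \ X := by
  ext v; by_cases hX : v ∈ X <;> by_cases hB : v ∈ B <;> simp [trichotomy, hX, hB]

lemma trichotomy_preimage_two (hXB : X ⊆ B) : trichotomy X B ⁻¹' {2} = Bᶜ := by
  ext v
  by_cases hX : v ∈ X
  · simp [trichotomy, hX, hXB hX]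
  · by_cases hB : v ∈ B <;> simp [trichotomy, hX, hB]

lemma trichotomy_preimage_zero_one (hXB : X ⊆ B) : trichotomy X B ⁻¹' {0, 1} = B := by
  ext v
  by_cases hX : v ∈ X
  · simp [trichotomy, hX, hXB hX]
  · by_cases hB : v ∈ B <;> simp [trichotomy, hX, hB]

lemma measurable_trichotomy [MeasurableSpace V] (hX : MeasurableSet X) (hB : MeasurableSet B)
    (hXB : X ⊆ B) : Measurable (trichotomy X B) := by
  refine measurable_to_countable' fun t => ?_
  fin_cases t
  · simpa [trichotomy_preimage_zero] using hX
  · simpa [trichotomy_preimage_one] using hB.diff hX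
  · simpa [trichotomy_preimage_two hXB] using hB.compl

lemma trichotomy_surjective (hXB : X ⊆ B) (hX : X.Nonempty) (hBX : (B \ X).Nonempty)
    (hB : Bᶜ.Nonempty) : Function.Surjective (trichotomy X B) := by
  intro t
  fin_cases t
  · obtain ⟨v, hv⟩ := hX
    exact ⟨v, by simp [trichotomy, hv]⟩
  · obtain ⟨v, hvB, hvX⟩ := hBX
    exact ⟨v, by simp [trichotomy, hvB, hvX]⟩
  · obtain ⟨v, hvB⟩ := hB
    have hvX : v ∉ X := fun h => hvB (hXB h)
    exact ⟨v, by simp [trichotomy, hvX, show v ∉ B from hvB]⟩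

lemma decide_mem_preimage_true (X : Set V) : (fun v => decide (v ∈ X)) ⁻¹' {true} = X := by
  ext; simp

lemma decide_mem_preimage_false (X : Set V) : (fun v => decide (v ∈ X)) ⁻¹' {false} = Xᶜ := by
  ext; simp

lemma decide_mem_surjective (hX : X.Nonempty) (hXc : Xᶜ.Nonempty) :
    Function.Surjective fun v => decide (v ∈ X) := by
  rintro (_ | _)
  · obtain ⟨v, hv⟩ := hXc
    exact ⟨v, by simpa using hv⟩
  · obtain ⟨v, hv⟩ := hX
    exact ⟨v, by simpa using hv⟩

end Cells

section Pushforward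

variable {V T : Type} [MeasurableSpace V] [MeasurableSpace T]

lemma pushPM_apply {f : V → T} (hf : Measurable f) (μ : ProbabilityMeasure V) {s : Set T}
    (hs : MeasurableSet s) : (pushPM hf μ : Measure T) s = (μ : Measure V) (f ⁻¹' s) := by
  rw [pushPM, ProbabilityMeasure.toMeasure_map, Measure.map_apply hf hs]

lemma pushPM_eq_pushPM_of_preimage_singleton [Countable T] [MeasurableSingletonClass T]
    {f g : V → T} (hf : Measurable f) (hg : Measurable g) {μ : ProbabilityMeasure V}
    (h : ∀ t, (μ : Measure V) (f ⁻¹' {t}) = (μ : Measure V) (g ⁻¹' {t})) :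
    pushPM hf μ = pushPM hg μ :=
  ProbabilityMeasure.toMeasure_injective <| Measure.ext_iff_singleton.2 fun t => by
    rw [pushPM_apply hf μ (measurableSet_singleton t),
      pushPM_apply hg μ (measurableSet_singleton t), h]

end Pushforward

section Circle

instance : IsProbabilityMeasure (volume : Measure UnitAddCircle) :=
  ⟨UnitAddCircle.measure_univ⟩

noncomputable def haarCircle : ProbabilityMeasure UnitAddCircle := ⟨volume, inferInstance⟩

lemma UnitAddCircle.volume_singleton (z : UnitAddCircle) :
    volume ({z} : Set UnitAddCircle) = 0 := by
  simpa using AddCircle.volume_closedBall 1 (x := z) 0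

lemma UnitAddCircle.exists_ne_zero : ∃ z : UnitAddCircle, z ≠ 0 := by
  by_contra! h
  have : (univ : Set UnitAddCircle) = {0} :=
    eq_singleton_iff_unique_mem.2 ⟨trivial, fun z _ => h z⟩
  simpa [this, UnitAddCircle.volume_singleton] using UnitAddCircle.measure_univ

lemma UnitAddCircle.exists_measurableSet_volume_eq {s : ℝ} (hs₀ : 0 ≤ s) (hs₁ : s ≤ 1) :
    ∃ I : Set UnitAddCircle, MeasurableSet I ∧ I.Nonempty ∧ Iᶜ.Nonempty ∧
      volume I = ENNReal.ofReal s := by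
  obtain ⟨z, hz⟩ := UnitAddCircle.exists_ne_zero
  -- Removing the null point `z` keeps `Iᶜ` nonempty also when `s = 1`.
  refine ⟨Metric.closedBall 0 (s / 2) \ {z}, Metric.isClosed_closedBall.measurableSet.diff
    (measurableSet_singleton z), ⟨0, Metric.mem_closedBall_self (by positivity), hz.symm⟩,
    ⟨z, fun h => h.2 rfl⟩, ?_⟩
  rw [measure_sdiff_null (UnitAddCircle.volume_singleton z), AddCircle.volume_closedBall,
    min_eq_right (by linarith)]
  ring_nf

end Circle

section Update

variable {U : UpdFamily} {V T : Type} [MeasurableSpace V] [MeasurableSpace T]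

theorem P1.toMeasure_apply_eq_one (h1 : P1 U) {X : Set (ProbabilityMeasure V)} {B : Set V}
    (hB : MeasurableSet B) {ν : ProbabilityMeasure V} (hν : ν ∈ U V X B) :
    (ν : Measure V) B = 1 := by
  rw [← ProbabilityMeasure.ennreal_coeFn_eq_coeFn_toMeasure, h1 V X B hB ν hν, ENNReal.coe_one]

theorem P2.pushPM_mem_update (h2 : P2 U) {f : V → T} (hf : Measurable f)
    (hfs : Function.Surjective f) {μ ρ : ProbabilityMeasure V} {S : Set T} (hS : MeasurableSet S)
    (hρ : ρ ∈ U V {μ} (f ⁻¹' S)) : pushPM hf ρ ∈ U T {pushPM hf μ} S := by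
  rw [← image_singleton, h2 V T f hf hfs {μ} S hS]
  exact mem_image_of_mem _ hρ

theorem P2.exists_mem_update_prod (h2 : P2 U) [Nonempty T] (ξ : ProbabilityMeasure T)
    {μ ν : ProbabilityMeasure V} {B : Set V} (hB : MeasurableSet B) (hν : ν ∈ U V {μ} B) :
    ∃ ρ ∈ U (T × V) {ξ.prod μ} (univ ×ˢ B), pushPM measurable_snd ρ = ν := by
  have h := h2 (T × V) V Prod.snd measurable_snd Prod.snd_surjective {ξ.prod μ} B hB
  rw [image_singleton, show pushPM measurable_snd (ξ.prod μ) = μ from ξ.map_snd_prod μ] at h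
  rwa [h, ← univ_prod] at hν

theorem pushPM_eq_self_of_mem_update (h2 : P2 U) (h6 : P6' U) {f : V → V} (hf : Measurable f)
    (hfs : Function.Surjective f) {μ ρ : ProbabilityMeasure V} (hμ : pushPM hf μ = μ)
    {B : Set V} (hB : MeasurableSet B) (hfB : f ⁻¹' B = B) (hρ : ρ ∈ U V {μ} B) :
    pushPM hf ρ = ρ := by
  have h := h2.pushPM_mem_update hf hfs hB (hfB.symm ▸ hρ)
  rw [hμ] at h
  exact h6 V μ B hB h hρ

theorem update_preimage_singleton_eq (h2 : P2 U) (h6 : P6' U) [Countable T]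
    [MeasurableSingletonClass T] {f g : V → T} (hf : Measurable f) (hg : Measurable g)
    (hfs : Function.Surjective f) (hgs : Function.Surjective g) {μ ρ : ProbabilityMeasure V}
    (hμ : ∀ t, (μ : Measure V) (f ⁻¹' {t}) = (μ : Measure V) (g ⁻¹' {t}))
    {S : Set T} (hS : MeasurableSet S) (hfg : f ⁻¹' S = g ⁻¹' S) (hρ : ρ ∈ U V {μ} (f ⁻¹' S))
    (t : T) : (ρ : Measure V) (f ⁻¹' {t}) = (ρ : Measure V) (g ⁻¹' {t}) := by
  have hf' := h2.pushPM_mem_update hf hfs hS hρ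
  have hg' := h2.pushPM_mem_update hg hgs hS (hfg ▸ hρ)
  rw [← pushPM_eq_pushPM_of_preimage_singleton hf hg hμ] at hg'
  have h := congrArg (fun m : ProbabilityMeasure T => (m : Measure T) {t}) (h6 T _ S hS hf' hg')
  simpa only [pushPM_apply _ _ (measurableSet_singleton t)] using h

theorem update_apply_eq_of_apply_eq (h2 : P2 U) (h6 : P6' U) {μ ρ : ProbabilityMeasure V}
    {B X Y : Set V} (hB : MeasurableSet B) (hX : MeasurableSet X) (hY : MeasurableSet Y)
    (hXB : X ⊆ B) (hYB : Y ⊆ B) (hX₀ : X.Nonempty) (hBX : (B \ X).Nonempty)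
    (hY₀ : Y.Nonempty) (hBY : (B \ Y).Nonempty) (hXY : (μ : Measure V) X = (μ : Measure V) Y)
    (hρ : ρ ∈ U V {μ} B) : (ρ : Measure V) X = (ρ : Measure V) Y := by
  by_cases hBu : B = univ
  · -- There is no third cell to collapse onto: use the two cells `X`, `Xᶜ`.
    subst hBu
    rw [← compl_eq_univ_sdiff] at hBX hBY
    have hf := measurable_to_bool (by rwa [decide_mem_preimage_true X])
    have hg := measurable_to_bool (by rwa [decide_mem_preimage_true Y])
    have hμ : ∀ t, (μ : Measure V) ((fun v => decide (v ∈ X)) ⁻¹' {t}) =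
        (μ : Measure V) ((fun v => decide (v ∈ Y)) ⁻¹' {t}) := by
      rintro (_ | _)
      · rw [decide_mem_preimage_false, decide_mem_preimage_false,
          prob_compl_eq_one_sub hX, prob_compl_eq_one_sub hY, hXY]
      · rwa [decide_mem_preimage_true, decide_mem_preimage_true]
    have h := update_preimage_singleton_eq h2 h6 hf hg (decide_mem_surjective hX₀ hBX)
      (decide_mem_surjective hY₀ hBY) hμ MeasurableSet.univ rfl hρ true
    rwa [decide_mem_preimage_true, decide_mem_preimage_true] at h
  · have hBc : Bᶜ.Nonempty := nonempty_compl.2 hBu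
    have hμ : ∀ t, (μ : Measure V) (trichotomy X B ⁻¹' {t}) =
        (μ : Measure V) (trichotomy Y B ⁻¹' {t}) := by
      intro t
      fin_cases t
      · simpa [trichotomy_preimage_zero] using hXY
      · simp only [Fin.mk_one, trichotomy_preimage_one]
        rw [measure_sdiff hXB hX.nullMeasurableSet (measure_ne_top _ _),
          measure_sdiff hYB hY.nullMeasurableSet (measure_ne_top _ _), hXY]
      · simp [trichotomy_preimage_two hXB, trichotomy_preimage_two hYB]
    have h := update_preimage_singleton_eq h2 h6 (measurable_trichotomy hX hB hXB)
      (measurable_trichotomy hY hB hYB) (trichotomy_surjective hXB hX₀ hBX hBc)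
      (trichotomy_surjective hYB hY₀ hBY hBc) hμ (S := {0, 1}) (Set.toFinite _).measurableSet
      (by rw [trichotomy_preimage_zero_one hXB, trichotomy_preimage_zero_one hYB])
      (by rwa [trichotomy_preimage_zero_one hXB]) 0
    rwa [trichotomy_preimage_zero, trichotomy_preimage_zero] at h

theorem map_fst_eq_volume_of_mem_update (h2 : P2 U) (h6 : P6' U) {μ : ProbabilityMeasure V}
    {B : Set V} (hB : MeasurableSet B) {ρ : ProbabilityMeasure (UnitAddCircle × V)}
    (hρ : ρ ∈ U (UnitAddCircle × V) {haarCircle.prod μ} (univ ×ˢ B)) :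
    (ρ : Measure (UnitAddCircle × V)).map Prod.fst = volume := by
  have hrot : ∀ g : UnitAddCircle,
      (ρ : Measure (UnitAddCircle × V)).map (Prod.map (g + ·) id) = ρ := by
    intro g
    have hf : Measurable (Prod.map (g + ·) (id : V → V)) :=
      (measurable_const_add g).prodMap measurable_id
    have hμ : pushPM hf (haarCircle.prod μ) = haarCircle.prod μ := by
      refine ProbabilityMeasure.toMeasure_injective ?_
      rw [pushPM, ProbabilityMeasure.toMeasure_map, ProbabilityMeasure.toMeasure_prod,
        ← Measure.map_prod_map _ _ (measurable_const_add g) measurable_id]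
      simp [haarCircle, map_add_left_eq_self]
    have h := pushPM_eq_self_of_mem_update h2 h6 hf
      ((add_left_surjective g).prodMap Function.surjective_id) hμ
      (MeasurableSet.univ.prod hB) (by simp [preimage_prod_map_prod]) hρ
    exact congrArg ProbabilityMeasure.toMeasure h
  have : ((ρ : Measure (UnitAddCircle × V)).map Prod.fst).IsAddLeftInvariant := ⟨fun g => by
    rw [Measure.map_map (measurable_const_add g) measurable_fst]
    conv_rhs => rw [← hrot g]
    rw [Measure.map_map measurable_fst ((measurable_const_add g).prodMap measurable_id)]
    rfl⟩
  have : IsProbabilityMeasure ((ρ : Measure (UnitAddCircle × V)).map Prod.fst) :=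
    Measure.isProbabilityMeasure_map measurable_fst.aemeasurable
  have hm := Measure.isAddInvariant_eq_smul_of_compactSpace
    ((ρ : Measure (UnitAddCircle × V)).map Prod.fst) volume
  rw [hm, show Measure.addHaarScalarFactor _ volume = 1 by
    simpa using (congrArg (fun ν : Measure UnitAddCircle => ν univ) hm).symm, one_smul]

theorem update_apply_eq_div_of_subset (h1 : P1 U) (h2 : P2 U) (h6 : P6' U)
    {μ ν : ProbabilityMeasure V} {A B : Set V} (hA : MeasurableSet A) (hB : MeasurableSet B)
    (hAB : A ⊆ B) (hA₀ : A.Nonempty) (hBA : (B \ A).Nonempty) (hμB : (μ : Measure V) B ≠ 0)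
    (hν : ν ∈ U V {μ} B) :
    (ν : Measure V) A = (μ : Measure V) A / (μ : Measure V) B := by
  have hle : (μ : Measure V) A / (μ : Measure V) B ≤ 1 :=
    ENNReal.div_le_of_le_mul (by rw [one_mul]; exact measure_mono hAB)
  obtain ⟨I, hI, hI₀, hIc, hvolI⟩ := UnitAddCircle.exists_measurableSet_volume_eq
    ENNReal.toReal_nonneg (ENNReal.toReal_le_of_le_ofReal zero_le_one (by simpa using hle))
  rw [ENNReal.ofReal_toReal (ne_top_of_le_ne_top ENNReal.one_ne_top hle)] at hvolI
  obtain ⟨ρ, hρ, rfl⟩ := h2.exists_mem_update_prod haarCircle hB hν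
  have hρB : (ρ : Measure (UnitAddCircle × V)) (univ ×ˢ B)ᶜ = 0 :=
    (prob_compl_eq_zero_iff (MeasurableSet.univ.prod hB)).2
      (h1.toMeasure_apply_eq_one (MeasurableSet.univ.prod hB) hρ)
  have hmass : (haarCircle.prod μ : Measure (UnitAddCircle × V)) (univ ×ˢ A) =
      (haarCircle.prod μ : Measure (UnitAddCircle × V)) (I ×ˢ B) := by
    rw [ProbabilityMeasure.toMeasure_prod, Measure.prod_prod, Measure.prod_prod,
      show (haarCircle : Measure UnitAddCircle) = volume from rfl, measure_univ, one_mul, hvolI,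
      ENNReal.div_mul_cancel hμB (measure_ne_top _ _)]
  obtain ⟨a, haB, haA⟩ := hBA
  obtain ⟨z, hz⟩ := hIc
  calc (pushPM measurable_snd ρ : Measure V) A
      = (ρ : Measure (UnitAddCircle × V)) (univ ×ˢ A) := by
        rw [pushPM_apply _ _ hA, univ_prod]
    _ = (ρ : Measure (UnitAddCircle × V)) (I ×ˢ B) :=
        update_apply_eq_of_apply_eq h2 h6 (MeasurableSet.univ.prod hB)
          (MeasurableSet.univ.prod hA) (hI.prod hB) (prod_mono subset_rfl hAB)
          (prod_mono (subset_univ I) subset_rfl) (univ_nonempty.prod hA₀)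
          ⟨(0, a), by simp [haB, haA]⟩ (hI₀.prod ⟨a, haB⟩) ⟨(z, a), by simp_all⟩ hmass hρ
    _ = (ρ : Measure (UnitAddCircle × V)) (I ×ˢ univ ∩ univ ×ˢ B) := by
        rw [prod_inter_prod, inter_univ, univ_inter]
    _ = (ρ : Measure (UnitAddCircle × V)) (Prod.fst ⁻¹' I) := by
        rw [measure_inter_conull hρB, prod_univ]
    _ = (μ : Measure V) A / (μ : Measure V) B := by
        rw [← Measure.map_apply measurable_fst hI, map_fst_eq_volume_of_mem_update h2 h6 hB hρ,
          hvolI]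

theorem update_apply_eq_div (h1 : P1 U) (h2 : P2 U) (h6 : P6' U)
    {μ ν : ProbabilityMeasure V} {A B : Set V} (hA : MeasurableSet A) (hB : MeasurableSet B)
    (hAB : A ⊆ B) (hμB : (μ : Measure V) B ≠ 0) (hν : ν ∈ U V {μ} B) :
    (ν : Measure V) A = (μ : Measure V) A / (μ : Measure V) B := by
  rcases A.eq_empty_or_nonempty with rfl | hA₀
  · simp
  by_cases hBA : (B \ A).Nonempty
  · exact update_apply_eq_div_of_subset h1 h2 h6 hA hB hAB hA₀ hBA hμB hν
  obtain rfl : A = B := hAB.antisymm (sdiff_eq_empty.1 (not_nonempty_iff_eq_empty.1 hBA))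
  rw [ENNReal.div_self hμB (measure_ne_top _ _), h1.toMeasure_apply_eq_one hA hν]

theorem update_apply_eq_condProb (h1 : P1 U) (h2 : P2 U) (h6 : P6' U)
    {μ ν : ProbabilityMeasure V} {A B : Set V} (hA : MeasurableSet A) (hB : MeasurableSet B)
    (hμB : 0 < μ B) (hν : ν ∈ U V {μ} B) : ν A = condProb μ A B := by
  have hνB : (ν : Measure V) Bᶜ = 0 :=
    (prob_compl_eq_zero_iff hB).2 (h1.toMeasure_apply_eq_one hB hν)
  rw [← ENNReal.coe_inj, condProb, ENNReal.coe_div hμB.ne',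
    ProbabilityMeasure.ennreal_coeFn_eq_coeFn_toMeasure,
    ProbabilityMeasure.ennreal_coeFn_eq_coeFn_toMeasure,
    ProbabilityMeasure.ennreal_coeFn_eq_coeFn_toMeasure, ← measure_inter_conull hνB]
  exact update_apply_eq_div h1 h2 h6 (hA.inter hB) hB inter_subset_right
    (by rw [← ProbabilityMeasure.ennreal_coeFn_eq_coeFn_toMeasure]; exact_mod_cast hμB.ne') hν

end Update

theorem stmt14_general (U : UpdFamily) (h1 : P1 U) (h2 : P2 U)
    (h6 : P6' U) :
    ∀ (W : Type) [MeasurableSpace W] (Pr : ProbabilityMeasure W), ∃ c : ℝ≥0,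
      ∀ (A B : Set W), MeasurableSet A → MeasurableSet B → 0 < Pr B →
        ∀ ν ∈ U W {Pr} B, ν A ≤ c * condProb Pr A B := by
  intro W _ Pr
  refine ⟨1, fun A B hA hB hPrB ν hν => ?_⟩
  rw [one_mul, update_apply_eq_condProb h1 h2 h6 hA hB hPrB hν]

/-- P1, P2, and P6' together imply P6''. -/
theorem stmt14 (U : UpdFamily) (hbase : UpdBase U) (h1 : P1 U) (h2 : P2 U)
    (h6 : P6' U) :
    ∀ (W : Type) [MeasurableSpace W] (Pr : ProbabilityMeasure W), ∃ c : ℝ≥0,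
      ∀ (A B : Set W), MeasurableSet A → MeasurableSet B → 0 < Pr B →
        ∀ ν ∈ U W {Pr} B, ν A ≤ c * condProb Pr A B :=
  stmt14_general U h1 h2 h6
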